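/- Assume h : ℝ^p → [0,+∞] is convex, proper, the minimization problem defining β̂ has at least one solution, and h(β*) < +∞. Let α ∈ (0,1) and r > 0. If H((1−α)r) ≤ (1+α²)r and H((1−α²)r) ≥ r, then ‖X(β̂−β*)‖ ≥ (1−α)r, where H(t) = (1/t)·sup_{β∈ℝ^p : ‖X(β−β*)‖ ≤ t} (εᵀX(β−β*) + h(β*) − h(β)). -/
import Mathlib


open scoped ENNReal

/-- Euclidean norm of a vector in `ℝ^k`. -/
noncomputable def l2norm {k : ℕ} (v : Fin k → ℝ) : ℝ := Real.sqrt (∑ i, (v i) ^ 2)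

/-- Euclidean inner product on `ℝ^k`. -/
noncomputable def dotp {k : ℕ} (u v : Fin k → ℝ) : ℝ := ∑ i, u i * v i

/-- `H(t) = (1/t) · sup_{β : ‖X(β-β*)‖ ≤ t} (εᵀX(β-β*) + h(β*) - h(β))`. -/
noncomputable def Hval {n p : ℕ} (X : Matrix (Fin n) (Fin p) ℝ) (bs : Fin p → ℝ)
    (h : (Fin p → ℝ) → ℝ≥0∞) (e : Fin n → ℝ) (t : ℝ) : ℝ :=
  sSup {x : ℝ | ∃ b : Fin p → ℝ, l2norm (X.mulVec (b - bs)) ≤ t ∧ h b ≠ ⊤ ∧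
      x = dotp e (X.mulVec (b - bs)) + (h bs).toReal - (h b).toReal} / t

lemma l2norm_nonneg' {k : ℕ} (v : Fin k → ℝ) : 0 ≤ l2norm v := Real.sqrt_nonneg _

lemma sq_l2norm {k : ℕ} (v : Fin k → ℝ) : l2norm v ^ 2 = dotp v v := by
  rw [l2norm, Real.sq_sqrt (by positivity)]
  simp [dotp, sq]

lemma dotp_le_cs {k : ℕ} (u v : Fin k → ℝ) : dotp u v ≤ l2norm u * l2norm v :=
  Real.sum_mul_le_sqrt_mul_sqrt Finset.univ u v

lemma sq_l2norm_combo {k : ℕ} (a c : ℝ) (x y : Fin k → ℝ) :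
    l2norm (a • x + c • y) ^ 2
      = a ^ 2 * l2norm x ^ 2 + 2 * a * c * dotp x y + c ^ 2 * l2norm y ^ 2 := by
  rw [sq_l2norm, sq_l2norm, sq_l2norm]
  simp only [dotp, Pi.add_apply, Pi.smul_apply, smul_eq_mul, Finset.mul_sum]
  rw [← Finset.sum_add_distrib, ← Finset.sum_add_distrib]
  exact Finset.sum_congr rfl fun i _ => by ring

lemma sq_l2norm_sub {k : ℕ} (x y : Fin k → ℝ) :
    l2norm (x - y) ^ 2 = l2norm x ^ 2 - 2 * dotp x y + l2norm y ^ 2 := by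
  have := sq_l2norm_combo (1 : ℝ) (-1 : ℝ) x y
  simp only [one_smul, neg_one_smul, ← sub_eq_add_neg] at this
  rw [this]; ring

lemma l2norm_combo_le {k : ℕ} (a c : ℝ) (ha : 0 ≤ a) (hc : 0 ≤ c) (x y : Fin k → ℝ) :
    l2norm (a • x + c • y) ≤ a * l2norm x + c * l2norm y := by
  have hx := l2norm_nonneg' x
  have hy := l2norm_nonneg' y
  have hn : 0 ≤ l2norm (a • x + c • y) := l2norm_nonneg' _
  have hR : 0 ≤ a * l2norm x + c * l2norm y := by positivity
  have hsq : l2norm (a • x + c • y) ^ 2 ≤ (a * l2norm x + c * l2norm y) ^ 2 := by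
    have hcs := dotp_le_cs x y
    have h2 : 2 * a * c * dotp x y ≤ 2 * a * c * (l2norm x * l2norm y) := by
      apply mul_le_mul_of_nonneg_left hcs (by positivity)
    rw [sq_l2norm_combo]
    nlinarith
  calc l2norm (a • x + c • y) = Real.sqrt (l2norm (a • x + c • y) ^ 2) :=
        (Real.sqrt_sq hn).symm
    _ ≤ Real.sqrt ((a * l2norm x + c * l2norm y) ^ 2) := Real.sqrt_le_sqrt hsq
    _ = a * l2norm x + c * l2norm y := Real.sqrt_sq hR

lemma dotp_combo_right {k : ℕ} (e : Fin k → ℝ) (a c : ℝ) (x y : Fin k → ℝ) :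
    dotp e (a • x + c • y) = a * dotp e x + c * dotp e y := by
  simp only [dotp, Pi.add_apply, Pi.smul_apply, smul_eq_mul, Finset.mul_sum]
  rw [← Finset.sum_add_distrib]
  exact Finset.sum_congr rfl fun i _ => by ring

lemma combo_sub {p : ℕ} (a : ℝ) (b₁ b₂ bs : Fin p → ℝ) :
    (a • b₁ + (1 - a) • b₂) - bs = a • (b₁ - bs) + (1 - a) • (b₂ - bs) := by
  funext i
  simp only [Pi.sub_apply, Pi.add_apply, Pi.smul_apply, smul_eq_mul]
  ring

lemma mulVec_combo {n p : ℕ} (X : Matrix (Fin n) (Fin p) ℝ) (a : ℝ) (b₁ b₂ bs : Fin p → ℝ) :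
    X.mulVec ((a • b₁ + (1 - a) • b₂) - bs)
      = a • X.mulVec (b₁ - bs) + (1 - a) • X.mulVec (b₂ - bs) := by
  rw [combo_sub, Matrix.mulVec_add, Matrix.mulVec_smul, Matrix.mulVec_smul]


lemma limit_step (A C M : ℝ) (hM : 0 ≤ M)
    (hc : ∀ lam : ℝ, 0 < lam → lam ≤ 1 → A ≤ C + lam / 2 * M) : A ≤ C := by
  by_contra hx
  push_neg at hx
  have hγ : 0 < A - C := by linarith
  have hlam0 : 0 < min 1 ((A - C) / (M + 1)) := lt_min one_pos (by positivity)
  have hkey := hc _ hlam0 (min_le_left _ _)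
  have h1' : min 1 ((A - C) / (M + 1)) ≤ (A - C) / (M + 1) := min_le_right _ _
  have h2' : (A - C) / (M + 1) * M < A - C := by
    rw [div_mul_eq_mul_div, div_lt_iff₀ (by linarith)]
    nlinarith
  nlinarith [hlam0.le, hM]

set_option maxHeartbeats 2000000 in
/-- if `H((1-α)r) ≤ (1+α²)r` and `H((1-α²)r) ≥ r` for some `α ∈ (0,1)` and
`r > 0`, then `‖X(β̂-β*)‖ ≥ (1-α)r`. -/
theorem almost_fixed_point_lower_bound {n p : ℕ} (X : Matrix (Fin n) (Fin p) ℝ)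
    (bs : Fin p → ℝ) (ε : Fin n → ℝ) (y : Fin n → ℝ) (hy : y = X.mulVec bs + ε)
    (h : (Fin p → ℝ) → ℝ≥0∞)
    (hconv : ∀ b₁ b₂ : Fin p → ℝ, ∀ a : ℝ, 0 ≤ a → a ≤ 1 →
      h (a • b₁ + (1 - a) • b₂) ≤ ENNReal.ofReal a * h b₁ + ENNReal.ofReal (1 - a) * h b₂)
    (hproper : ∃ b : Fin p → ℝ, h b ≠ ⊤)
    (hexists : ∀ (y' : Fin n → ℝ) (X' : Matrix (Fin n) (Fin p) ℝ),
      ∃ bhat' : Fin p → ℝ, ∀ b : Fin p → ℝ,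
        ENNReal.ofReal (l2norm (X'.mulVec bhat' - y') ^ 2) + 2 * h bhat' ≤
          ENNReal.ofReal (l2norm (X'.mulVec b - y') ^ 2) + 2 * h b)
    (hfin : h bs ≠ ⊤)
    (bhat : Fin p → ℝ)
    (hmin : ∀ b : Fin p → ℝ,
      ENNReal.ofReal (l2norm (X.mulVec bhat - y) ^ 2) + 2 * h bhat ≤
        ENNReal.ofReal (l2norm (X.mulVec b - y) ^ 2) + 2 * h b)
    (α r : ℝ) (hα0 : 0 < α) (hα1 : α < 1) (hr : 0 < r)
    (h1 : Hval X bs h ε ((1 - α) * r) ≤ (1 + α ^ 2) * r)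
    (h2 : r ≤ Hval X bs h ε ((1 - α ^ 2) * r)) :
    (1 - α) * r ≤ l2norm (X.mulVec (bhat - bs)) := by
  by_contra hcon
  push_neg at hcon
  have hs0 : 0 ≤ l2norm (X.mulVec (bhat - bs)) := l2norm_nonneg' _
  have ht1pos : 0 < (1 - α) * r := by
    have : 0 < 1 - α := by linarith
    positivity
  have ht2pos : 0 < (1 - α ^ 2) * r := by nlinarith
  have ht12 : (1 - α) * r < (1 - α ^ 2) * r := by nlinarith
  have hst2 : l2norm (X.mulVec (bhat - bs)) < (1 - α ^ 2) * r := lt_trans hcon ht12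
  -- finiteness of h bhat
  have hbhatfin : h bhat ≠ ⊤ := by
    intro htop
    have hk := hmin bs
    have hRfin : ENNReal.ofReal (l2norm (X.mulVec bs - y) ^ 2) + 2 * h bs ≠ ⊤ :=
      ENNReal.add_ne_top.mpr ⟨ENNReal.ofReal_ne_top, ENNReal.mul_ne_top (by norm_num) hfin⟩
    have hLtop : ENNReal.ofReal (l2norm (X.mulVec bhat - y) ^ 2) + 2 * h bhat = ⊤ := by
      rw [htop]
      simp
    rw [hLtop, top_le_iff] at hk
    exact hRfin hk
  -- real-valued optimality
  have hopt : ∀ b : Fin p → ℝ, h b ≠ ⊤ →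
      l2norm (X.mulVec (bhat - bs)) ^ 2
        - 2 * (dotp ε (X.mulVec (bhat - bs)) + (h bs).toReal - (h bhat).toReal)
      ≤ l2norm (X.mulVec (b - bs)) ^ 2
        - 2 * (dotp ε (X.mulVec (b - bs)) + (h bs).toReal - (h b).toReal) := by
    intro b hb
    have hk := hmin b
    have hRfin : ENNReal.ofReal (l2norm (X.mulVec b - y) ^ 2) + 2 * h b ≠ ⊤ :=
      ENNReal.add_ne_top.mpr ⟨ENNReal.ofReal_ne_top, ENNReal.mul_ne_top (by norm_num) hb⟩
    have hreal := ENNReal.toReal_mono hRfin hk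
    rw [ENNReal.toReal_add ENNReal.ofReal_ne_top (ENNReal.mul_ne_top (by norm_num) hbhatfin),
        ENNReal.toReal_add ENNReal.ofReal_ne_top (ENNReal.mul_ne_top (by norm_num) hb),
        ENNReal.toReal_ofReal (by positivity), ENNReal.toReal_ofReal (by positivity),
        ENNReal.toReal_mul, ENNReal.toReal_mul] at hreal
    norm_num at hreal
    have hyb : ∀ c : Fin p → ℝ, X.mulVec c - y = X.mulVec (c - bs) - ε := by
      intro c
      rw [hy, Matrix.mulVec_sub]
      abel
    rw [hyb bhat, hyb b, sq_l2norm_sub, sq_l2norm_sub] at hreal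
    have hcomm : ∀ z : Fin n → ℝ, dotp z ε = dotp ε z := by
      intro z; simp [dotp, mul_comm]
    rw [hcomm (X.mulVec (bhat - bs)), hcomm (X.mulVec (b - bs))] at hreal
    linarith
  -- real-valued convexity
  have hconvR : ∀ b₁ b₂ : Fin p → ℝ, h b₁ ≠ ⊤ → h b₂ ≠ ⊤ → ∀ a : ℝ, 0 ≤ a → a ≤ 1 →
      h (a • b₁ + (1 - a) • b₂) ≠ ⊤ ∧
      a * (dotp ε (X.mulVec (b₁ - bs)) + (h bs).toReal - (h b₁).toReal)
        + (1 - a) * (dotp ε (X.mulVec (b₂ - bs)) + (h bs).toReal - (h b₂).toReal)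
      ≤ dotp ε (X.mulVec ((a • b₁ + (1 - a) • b₂) - bs)) + (h bs).toReal
          - (h (a • b₁ + (1 - a) • b₂)).toReal := by
    intro b₁ b₂ hb₁ hb₂ a ha0 ha1
    have hc := hconv b₁ b₂ a ha0 ha1
    have hRfin : ENNReal.ofReal a * h b₁ + ENNReal.ofReal (1 - a) * h b₂ ≠ ⊤ :=
      ENNReal.add_ne_top.mpr ⟨ENNReal.mul_ne_top ENNReal.ofReal_ne_top hb₁,
        ENNReal.mul_ne_top ENNReal.ofReal_ne_top hb₂⟩
    have hfin' : h (a • b₁ + (1 - a) • b₂) ≠ ⊤ := by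
      intro htop; rw [htop] at hc; exact hRfin (top_le_iff.mp hc)
    refine ⟨hfin', ?_⟩
    have hreal := ENNReal.toReal_mono hRfin hc
    rw [ENNReal.toReal_add (ENNReal.mul_ne_top ENNReal.ofReal_ne_top hb₁)
        (ENNReal.mul_ne_top ENNReal.ofReal_ne_top hb₂),
        ENNReal.toReal_mul, ENNReal.toReal_mul,
        ENNReal.toReal_ofReal ha0, ENNReal.toReal_ofReal (by linarith)] at hreal
    rw [mulVec_combo, dotp_combo_right]
    linarith
  -- the sup bound from h1 and the near-maximizer from h2
  have hsupS2 : r * ((1 - α ^ 2) * r) ≤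
      sSup {x : ℝ | ∃ b : Fin p → ℝ, l2norm (X.mulVec (b - bs)) ≤ (1 - α ^ 2) * r ∧ h b ≠ ⊤ ∧
        x = dotp ε (X.mulVec (b - bs)) + (h bs).toReal - (h b).toReal} := by
    rw [Hval] at h2
    exact (le_div_iff₀ ht2pos).mp h2
  have hsupS1 : sSup {x : ℝ | ∃ b : Fin p → ℝ, l2norm (X.mulVec (b - bs)) ≤ (1 - α) * r ∧
        h b ≠ ⊤ ∧ x = dotp ε (X.mulVec (b - bs)) + (h bs).toReal - (h b).toReal}
      ≤ (1 + α ^ 2) * r * ((1 - α) * r) := by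
    rw [Hval] at h1
    exact (div_le_iff₀ ht1pos).mp h1
  have hzero_mem : ∀ t : ℝ, 0 < t → (0 : ℝ) ∈ {x : ℝ | ∃ b : Fin p → ℝ,
      l2norm (X.mulVec (b - bs)) ≤ t ∧ h b ≠ ⊤ ∧
      x = dotp ε (X.mulVec (b - bs)) + (h bs).toReal - (h b).toReal} := by
    intro t ht
    refine ⟨bs, ?_, hfin, ?_⟩
    · simp only [sub_self, Matrix.mulVec_zero]
      rw [show l2norm (0 : Fin n → ℝ) = 0 by simp [l2norm]]
      exact le_of_lt ht
    · simp only [sub_self, Matrix.mulVec_zero]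
      rw [show dotp ε (0 : Fin n → ℝ) = 0 by simp [dotp]]
      ring
  have hS1bdd : BddAbove {x : ℝ | ∃ b : Fin p → ℝ, l2norm (X.mulVec (b - bs)) ≤ (1 - α) * r ∧
        h b ≠ ⊤ ∧ x = dotp ε (X.mulVec (b - bs)) + (h bs).toReal - (h b).toReal} := by
    refine ⟨l2norm ε * ((1 - α) * r) + (h bs).toReal, ?_⟩
    rintro x ⟨b, hbn, hbf, rfl⟩
    have hcs := dotp_le_cs ε (X.mulVec (b - bs))
    have hεn : 0 ≤ l2norm ε := l2norm_nonneg' ε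
    have ht : (0:ℝ) ≤ (h b).toReal := ENNReal.toReal_nonneg
    nlinarith [l2norm_nonneg' (X.mulVec (b - bs))]
  -- pick near-maximizer b'
  have hδpos : 0 < ((1 - α) * r - l2norm (X.mulVec (bhat - bs)))
      * ((1 - α ^ 2) * r - (1 - α) * r) / 2 := by
    apply div_pos _ (by norm_num)
    apply mul_pos <;> linarith
  have hlt : r * ((1 - α ^ 2) * r)
      - ((1 - α) * r - l2norm (X.mulVec (bhat - bs))) * ((1 - α ^ 2) * r - (1 - α) * r) / 2
      < sSup {x : ℝ | ∃ b : Fin p → ℝ, l2norm (X.mulVec (b - bs)) ≤ (1 - α ^ 2) * r ∧ h b ≠ ⊤ ∧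
        x = dotp ε (X.mulVec (b - bs)) + (h bs).toReal - (h b).toReal} := by
    linarith
  obtain ⟨x, hxmem, hxgt⟩ :=
    exists_lt_of_lt_csSup ⟨0, hzero_mem ((1 - α ^ 2) * r) ht2pos⟩ hlt
  obtain ⟨b', hb'n, hb'f, rfl⟩ := hxmem
  have hW0 : 0 ≤ l2norm (X.mulVec (b' - bs)) := l2norm_nonneg' _
  -- Ineq2 : Δ b' ≤ Δ bhat + dotp w u - s^2
  have hcore : ∀ lam : ℝ, 0 < lam → lam ≤ 1 →
      dotp ε (X.mulVec (b' - bs)) + (h bs).toReal - (h b').toReal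
      ≤ (dotp ε (X.mulVec (bhat - bs)) + (h bs).toReal - (h bhat).toReal)
        + dotp (X.mulVec (b' - bs)) (X.mulVec (bhat - bs))
        - l2norm (X.mulVec (bhat - bs)) ^ 2
        + (lam / 2) * (l2norm (X.mulVec (b' - bs)) ^ 2
            - 2 * dotp (X.mulVec (b' - bs)) (X.mulVec (bhat - bs))
            + l2norm (X.mulVec (bhat - bs)) ^ 2) := by
    intro lam hl0 hl1
    obtain ⟨hfinl, hconvl⟩ := hconvR b' bhat hb'f hbhatfin lam (le_of_lt hl0) hl1
    have hoptl := hopt _ hfinl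
    have hnorm : l2norm (X.mulVec ((lam • b' + (1 - lam) • bhat) - bs)) ^ 2
        = lam ^ 2 * l2norm (X.mulVec (b' - bs)) ^ 2
          + 2 * lam * (1 - lam) * dotp (X.mulVec (b' - bs)) (X.mulVec (bhat - bs))
          + (1 - lam) ^ 2 * l2norm (X.mulVec (bhat - bs)) ^ 2 := by
      rw [mulVec_combo, sq_l2norm_combo]
    rw [hnorm] at hoptl
    have hmul : lam * (2 * (dotp ε (X.mulVec (b' - bs)) + (h bs).toReal - (h b').toReal))
        ≤ lam * (2 * (dotp ε (X.mulVec (bhat - bs)) + (h bs).toReal - (h bhat).toReal)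
          + 2 * dotp (X.mulVec (b' - bs)) (X.mulVec (bhat - bs))
          - 2 * l2norm (X.mulVec (bhat - bs)) ^ 2
          + lam * (l2norm (X.mulVec (b' - bs)) ^ 2
            - 2 * dotp (X.mulVec (b' - bs)) (X.mulVec (bhat - bs))
            + l2norm (X.mulVec (bhat - bs)) ^ 2)) := by
      nlinarith [hoptl, hconvl]
    have := le_of_mul_le_mul_left hmul hl0
    linarith
  have hM0 : 0 ≤ l2norm (X.mulVec (b' - bs)) ^ 2
      - 2 * dotp (X.mulVec (b' - bs)) (X.mulVec (bhat - bs))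
      + l2norm (X.mulVec (bhat - bs)) ^ 2 := by
    have := sq_l2norm_sub (X.mulVec (b' - bs)) (X.mulVec (bhat - bs))
    nlinarith [sq_nonneg (l2norm (X.mulVec (b' - bs) - X.mulVec (bhat - bs)))]
  have hineq2 : dotp ε (X.mulVec (b' - bs)) + (h bs).toReal - (h b').toReal
      ≤ (dotp ε (X.mulVec (bhat - bs)) + (h bs).toReal - (h bhat).toReal)
        + dotp (X.mulVec (b' - bs)) (X.mulVec (bhat - bs))
        - l2norm (X.mulVec (bhat - bs)) ^ 2 :=
    limit_step _ _ _ hM0 hcore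
  -- Ineq1 : feasibility of the μ-combination at level (1-α) r
  have hts2 : 0 < (1 - α ^ 2) * r - l2norm (X.mulVec (bhat - bs)) := by linarith
  obtain ⟨μ, hμdef⟩ : ∃ μ : ℝ, μ = ((1 - α) * r - l2norm (X.mulVec (bhat - bs)))
      / ((1 - α ^ 2) * r - l2norm (X.mulVec (bhat - bs))) := ⟨_, rfl⟩
  have hμ0 : 0 < μ := by
    rw [hμdef]; apply div_pos _ hts2; linarith
  have hμ1 : μ ≤ 1 := by
    rw [hμdef, div_le_one hts2]; linarith
  have hμeq : μ * ((1 - α ^ 2) * r - l2norm (X.mulVec (bhat - bs)))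
      = (1 - α) * r - l2norm (X.mulVec (bhat - bs)) := by
    rw [hμdef]; exact div_mul_cancel₀ _ (ne_of_gt hts2)
  obtain ⟨hfinμ, hconvμ⟩ := hconvR b' bhat hb'f hbhatfin μ (le_of_lt hμ0) hμ1
  have hnormμ : l2norm (X.mulVec ((μ • b' + (1 - μ) • bhat) - bs)) ≤ (1 - α) * r := by
    rw [mulVec_combo]
    calc l2norm (μ • X.mulVec (b' - bs) + (1 - μ) • X.mulVec (bhat - bs))
        ≤ μ * l2norm (X.mulVec (b' - bs)) + (1 - μ) * l2norm (X.mulVec (bhat - bs)) :=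
          l2norm_combo_le μ (1 - μ) (le_of_lt hμ0) (by linarith) _ _
      _ ≤ μ * ((1 - α ^ 2) * r) + (1 - μ) * l2norm (X.mulVec (bhat - bs)) := by
          have h1' : μ * l2norm (X.mulVec (b' - bs)) ≤ μ * ((1 - α ^ 2) * r) :=
            mul_le_mul_of_nonneg_left hb'n (le_of_lt hμ0)
          linarith
      _ = (1 - α) * r := by linarith [hμeq]
  have hineq1 : μ * (dotp ε (X.mulVec (b' - bs)) + (h bs).toReal - (h b').toReal)
      + (1 - μ) * (dotp ε (X.mulVec (bhat - bs)) + (h bs).toReal - (h bhat).toReal)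
      ≤ (1 + α ^ 2) * r * ((1 - α) * r) := by
    refine le_trans hconvμ (le_trans (le_csSup hS1bdd ?_) hsupS1)
    exact ⟨μ • b' + (1 - μ) • bhat, hnormμ, hfinμ, rfl⟩
  -- combine
  have hdotle : dotp (X.mulVec (b' - bs)) (X.mulVec (bhat - bs))
      ≤ (1 - α ^ 2) * r * l2norm (X.mulVec (bhat - bs)) := by
    calc dotp (X.mulVec (b' - bs)) (X.mulVec (bhat - bs))
        ≤ l2norm (X.mulVec (b' - bs)) * l2norm (X.mulVec (bhat - bs)) := dotp_le_cs _ _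
      _ ≤ (1 - α ^ 2) * r * l2norm (X.mulVec (bhat - bs)) :=
          mul_le_mul_of_nonneg_right hb'n hs0
  have hfinal : dotp ε (X.mulVec (b' - bs)) + (h bs).toReal - (h b').toReal
      ≤ (1 + α ^ 2) * r * ((1 - α) * r)
        + l2norm (X.mulVec (bhat - bs)) * ((1 - α ^ 2) * r - (1 - α) * r) := by
    have h1μ : (1 - μ) * ((1 - α ^ 2) * r - l2norm (X.mulVec (bhat - bs)))
        = (1 - α ^ 2) * r - (1 - α) * r := by linarith [hμeq]
    have hDlow : (dotp ε (X.mulVec (b' - bs)) + (h bs).toReal - (h b').toReal)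
        - (1 - α ^ 2) * r * l2norm (X.mulVec (bhat - bs))
        + l2norm (X.mulVec (bhat - bs)) ^ 2
        ≤ dotp ε (X.mulVec (bhat - bs)) + (h bs).toReal - (h bhat).toReal := by
      linarith
    have hstep := mul_le_mul_of_nonneg_left hDlow (by linarith : (0:ℝ) ≤ 1 - μ)
    have h1μs := congrArg (· * l2norm (X.mulVec (bhat - bs))) h1μ
    simp only [sub_mul, mul_comm] at h1μs
    nlinarith [hineq1, hstep, h1μ, h1μs]
  linarith [hfinal, hxgt,
    mul_pos (show (0:ℝ) < (1 - α) * r - l2norm (X.mulVec (bhat - bs)) by linarith)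
      (show (0:ℝ) < (1 - α ^ 2) * r - (1 - α) * r by linarith)]
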